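/- Let F(x) = Σ_{t=1}^T (w_l^{(t)} + w_r^{(t)}·𝟙[x_{c_t} ≥ b_t]) be an ensemble of decision stumps on ℝ^d. Then for any x, and for ε ≥ 0, inf over ‖δ‖_∞ ≤ ε of y·F(x+δ) = Σ_t y·w_l^{(t)} + Σ_{k=1}^d inf over |δ_k| ≤ ε of Σ_{t : c_t = k} y·w_r^{(t)}·𝟙[x_k + δ_k ≥ b_t], and all infima are attained. -/

import Mathlib

/-!
The ensemble splits by split coordinate: `y F(x + δ)` is a constant plus a sum over coordinates
`k` of a function of `δ k` alone, and the sup-norm ball is the product of the intervals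
`|δ k| ≤ ε`. The infimum of a separable sum over a product set is therefore the sum of the
coordinatewise infima, attained at the product of coordinatewise minimisers. Each coordinate
function is a sum of weighted indicators, so it takes finitely many values and its infimum
over the interval is a minimum.
-/

lemma Finset.sum_apply_eq_sum_fiberwise {ι κ M : Type*} [Fintype κ] [DecidableEq κ]
    [AddCommMonoid M] (s : Finset ι) (c : ι → κ) (f : ι → κ → M) :
    ∑ t ∈ s, f t (c t) = ∑ k, ∑ t ∈ s with c t = k, f t k := by
  rw [← Finset.sum_fiberwise s c]
  refine Finset.sum_congr rfl fun k _ => Finset.sum_congr rfl fun t ht => ?_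
  rw [(Finset.mem_filter.mp ht).2]

lemma setOf_exists_and_eq_eq_image {α β : Type*} (p : α → Prop) (f : α → β) :
    {z | ∃ a, p a ∧ z = f a} = f '' {a | p a} := by
  ext z
  exact exists_congr fun a => and_congr_right' eq_comm

lemma finite_range_sum_mul_ite {ι α R : Type*} [NonAssocSemiring R] (s : Finset ι) (a : ι → R)
    (p : ι → α → Prop) [∀ t u, Decidable (p t u)] :
    (Set.range fun u => ∑ t ∈ s, a t * if p t u then 1 else 0).Finite := by
  refine (Set.finite_range fun s' : s.powerset => ∑ t ∈ (s' : Finset ι), a t).subset ?_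
  rintro _ ⟨u, rfl⟩
  refine ⟨⟨s.filter (p · u), Finset.mem_powerset.mpr (Finset.filter_subset _ _)⟩, ?_⟩
  simp only [mul_ite, mul_one, mul_zero, Finset.sum_ite, Finset.sum_const_zero, add_zero]

lemma Set.Finite.isLeast_csInf {α : Type*} [ConditionallyCompleteLinearOrder α] {s : Set α}
    (hne : s.Nonempty) (hfin : s.Finite) :
    IsLeast s (sInf s) :=
  ⟨hne.csInf_mem hfin, fun _ hz => csInf_le hfin.bddBelow hz⟩

lemma setOf_norm_le_eq_pi {ι : Type*} [Fintype ι] {ε : ℝ} (hε : 0 ≤ ε) :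
    {δ : ι → ℝ | ‖δ‖ ≤ ε} = Set.univ.pi fun _ => {u | |u| ≤ ε} := by
  ext δ
  simp only [Set.mem_univ_pi, pi_norm_le_iff_of_nonneg hε, Real.norm_eq_abs]
  exact Iff.rfl

lemma isLeast_image_sum_pi {ι M : Type*} {α : ι → Type*} [Fintype ι] [AddCommMonoid M]
    [PartialOrder M] [IsOrderedAddMonoid M] {s : ∀ i, Set (α i)} {f : ∀ i, α i → M} {m : ι → M}
    (h : ∀ i, IsLeast (f i '' s i) (m i)) :
    IsLeast ((fun δ : ∀ i, α i => ∑ i, f i (δ i)) '' Set.univ.pi s) (∑ i, m i) := by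
  choose δ hδs hδm using fun i => (h i).1
  refine ⟨⟨δ, fun i _ => hδs i, Finset.sum_congr rfl fun i _ => hδm i⟩, ?_⟩
  rintro _ ⟨δ', hδ', rfl⟩
  exact Finset.sum_le_sum fun i _ => (h i).2 ⟨δ' i, hδ' i (Set.mem_univ i), rfl⟩

section StumpEnsemble

variable {ι κ : Type*} [Fintype ι] [DecidableEq κ] (wl wr b : ι → ℝ) (c : ι → κ) (x : κ → ℝ)
  (y : ℝ)

noncomputable def coordMargin (k : κ) (u : ℝ) : ℝ :=
  ∑ t ∈ Finset.univ.filter (fun t => c t = k), y * wr t * (if x k + u ≥ b t then (1 : ℝ) else 0)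

lemma mul_sum_stumps_eq_add_sum_coordMargin [Fintype κ] (δ : κ → ℝ) :
    y * ∑ t, (wl t + wr t * (if (x + δ) (c t) ≥ b t then (1 : ℝ) else 0))
      = (∑ t, y * wl t) + ∑ k, coordMargin wr b c x y k (δ k) := by
  simp only [Finset.mul_sum, mul_add, Finset.sum_add_distrib, ← mul_assoc, Pi.add_apply,
    coordMargin, Finset.sum_apply_eq_sum_fiberwise Finset.univ c
      fun t k => y * wr t * (if x k + δ k ≥ b t then (1 : ℝ) else 0)]

end StumpEnsemble

theorem stmt_13_general {d T : ℕ} (wl wr b : Fin T → ℝ) (c : Fin T → Fin d)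
    (x : Fin d → ℝ) (y ε : ℝ) (hε : 0 ≤ ε) :
    (sInf {z : ℝ | ∃ δ : Fin d → ℝ, ‖δ‖ ≤ ε ∧
        z = y * ∑ t, (wl t + wr t * (if (x + δ) (c t) ≥ b t then (1 : ℝ) else 0))}
      = (∑ t, y * wl t) + ∑ k, sInf {z : ℝ | ∃ δk : ℝ, |δk| ≤ ε ∧
          z = ∑ t ∈ Finset.univ.filter (fun t => c t = k),
              y * wr t * (if x k + δk ≥ b t then (1 : ℝ) else 0)}) ∧
    (∃ δ : Fin d → ℝ, ‖δ‖ ≤ ε ∧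
      y * (∑ t, (wl t + wr t * (if (x + δ) (c t) ≥ b t then (1 : ℝ) else 0)))
        = sInf {z : ℝ | ∃ δ' : Fin d → ℝ, ‖δ'‖ ≤ ε ∧
            z = y * ∑ t, (wl t + wr t * (if (x + δ') (c t) ≥ b t then (1 : ℝ) else 0))}) ∧
    (∀ k : Fin d, ∃ δk : ℝ, |δk| ≤ ε ∧
      (∑ t ∈ Finset.univ.filter (fun t => c t = k),
          y * wr t * (if x k + δk ≥ b t then (1 : ℝ) else 0))
        = sInf {z : ℝ | ∃ δk' : ℝ, |δk'| ≤ ε ∧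
            z = ∑ t ∈ Finset.univ.filter (fun t => c t = k),
                y * wr t * (if x k + δk' ≥ b t then (1 : ℝ) else 0)}) := by
  have hcoord : ∀ k, IsLeast (coordMargin wr b c x y k '' {u | |u| ≤ ε})
      (sInf (coordMargin wr b c x y k '' {u | |u| ≤ ε})) := fun k =>
    Set.Finite.isLeast_csInf (Set.image_nonempty.mpr ⟨0, by simpa using hε⟩)
      ((finite_range_sum_mul_ite _ _ _).subset (Set.image_subset_range _ _))
  have hall : IsLeast ((fun δ : Fin d → ℝ =>
      y * ∑ t, (wl t + wr t * (if (x + δ) (c t) ≥ b t then (1 : ℝ) else 0))) '' {δ | ‖δ‖ ≤ ε})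
        ((∑ t, y * wl t) + ∑ k, sInf (coordMargin wr b c x y k '' {u | |u| ≤ ε})) := by
    simp only [mul_sum_stumps_eq_add_sum_coordMargin, setOf_norm_le_eq_pi hε]
    rw [← Set.image_image ((∑ t, y * wl t) + ·)]
    exact add_right_mono.map_isLeast (isLeast_image_sum_pi hcoord)
  -- after this, the coordinate sets of the goal are `coordMargin … k '' {u | |u| ≤ ε}` up to unfolding
  simp only [setOf_exists_and_eq_eq_image]
  refine ⟨hall.csInf_eq, ?_, fun k => (hcoord k).1⟩
  obtain ⟨δ, hδ, hmin⟩ := hall.1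
  exact ⟨δ, hδ, hmin.trans hall.csInf_eq.symm⟩

/-- exact separable computation of the robust margin for stump ensembles,
with all infima attained. -/
theorem stmt_13 {d T : ℕ} (wl wr b : Fin T → ℝ) (c : Fin T → Fin d)
    (x : Fin d → ℝ) (y ε : ℝ) (hy : y = 1 ∨ y = -1) (hε : 0 ≤ ε) :
    (sInf {z : ℝ | ∃ δ : Fin d → ℝ, ‖δ‖ ≤ ε ∧
        z = y * ∑ t, (wl t + wr t * (if (x + δ) (c t) ≥ b t then (1 : ℝ) else 0))}
      = (∑ t, y * wl t) + ∑ k, sInf {z : ℝ | ∃ δk : ℝ, |δk| ≤ ε ∧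
          z = ∑ t ∈ Finset.univ.filter (fun t => c t = k),
              y * wr t * (if x k + δk ≥ b t then (1 : ℝ) else 0)}) ∧
    (∃ δ : Fin d → ℝ, ‖δ‖ ≤ ε ∧
      y * (∑ t, (wl t + wr t * (if (x + δ) (c t) ≥ b t then (1 : ℝ) else 0)))
        = sInf {z : ℝ | ∃ δ' : Fin d → ℝ, ‖δ'‖ ≤ ε ∧
            z = y * ∑ t, (wl t + wr t * (if (x + δ') (c t) ≥ b t then (1 : ℝ) else 0))}) ∧
    (∀ k : Fin d, ∃ δk : ℝ, |δk| ≤ ε ∧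
      (∑ t ∈ Finset.univ.filter (fun t => c t = k),
          y * wr t * (if x k + δk ≥ b t then (1 : ℝ) else 0))
        = sInf {z : ℝ | ∃ δk' : ℝ, |δk'| ≤ ε ∧
            z = ∑ t ∈ Finset.univ.filter (fun t => c t = k),
                y * wr t * (if x k + δk' ≥ b t then (1 : ℝ) else 0)}) :=
  stmt_13_general wl wr b c x y ε hε
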